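/- arXiv:2004.00744 — 2 statements merged into one kernel-verified Lean document; each statement's English description precedes it below -/
import Mathlib

section
/- Let G be an acyclic pattern graph on a pattern set 𝓡 and let p be a joint pmf with full positivity (p(ℓ, r) > 0 for every ℓ and every r ∈ 𝓡) whose pattern mixture model factorizes with respect to G. Suppose r, s ∈ 𝓡 with s ∉ PA(r) satisfy: (blocking) every path from 1_d to r in G contains s; and (uninformative) every pattern q ∉ {s, r} lying on some path from s to r in G satisfies q < r in the pointwise order. Then p(ℓ, r) · p_r(ℓ, s) = p(ℓ, s) · p_r(ℓ, r) for every ℓ (the extrapolation distribution of pattern r given its observed part equals the conditional distribution computed from pattern s), and consequently the pattern mixture model of p also factorizes with respect to the graph G' obtained from G by replacing PA(r) with the single parent set {s} and leaving all other parent sets unchanged. -/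
open Finset

noncomputable section

/-- Response patterns: binary vectors of length `d`, ordered pointwise (`false < true`). -/
abbrev Pat (d : ℕ) := Fin d → Bool

/-- The all-true (fully observed) pattern `1_d`. -/
def allOnes (d : ℕ) : Pat d := fun _ => true

variable {d : ℕ}


instance (r s : Pat d) : Decidable (r ≤ s) :=
  decidable_of_iff (∀ j, r j ≤ s j) (by simp [Pi.le_def])

instance (r s : Pat d) : Decidable (r < s) :=
  decidable_of_iff (r ≤ s ∧ ¬ s ≤ r) lt_iff_le_not_ge.symm

/-- Two full-data values have the same observed part under pattern `r`. -/
def agree {X : Fin d → Type*} (r : Pat d) (ℓ ℓ' : ∀ j, X j) : Prop :=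
  ∀ j, r j = true → ℓ j = ℓ' j

instance {X : Fin d → Type*} [∀ j, DecidableEq (X j)] (r : Pat d) (ℓ ℓ' : ∀ j, X j) :
    Decidable (agree r ℓ ℓ') := by
  unfold agree; infer_instance

variable {X : Fin d → Type*} [∀ j, Fintype (X j)] [∀ j, DecidableEq (X j)]

/-- `p(ℓ, A) = Σ_{s ∈ A} p(ℓ, s)`. -/
def jointA (p : (∀ j, X j) → Pat d → ℝ) (ℓ : ∀ j, X j) (A : Finset (Pat d)) : ℝ :=
  ∑ s ∈ A, p ℓ s

/-- `p_r(ℓ, s) = Σ_{ℓ' ~_r ℓ} p(ℓ', s)` : observed-data mass under pattern `r`. -/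
def obsP (p : (∀ j, X j) → Pat d → ℝ) (r : Pat d) (ℓ : ∀ j, X j) (s : Pat d) : ℝ :=
  ∑ ℓ' ∈ univ.filter (fun ℓ' => agree r ℓ ℓ'), p ℓ' s

/-- `p_r(ℓ, A) = Σ_{s ∈ A} p_r(ℓ, s)`. -/
def obsPA (p : (∀ j, X j) → Pat d → ℝ) (r : Pat d) (ℓ : ∀ j, X j) (A : Finset (Pat d)) : ℝ :=
  ∑ s ∈ A, obsP p r ℓ s

/-- `p` is a joint pmf on (full data) × (pattern set `𝓡`): nonnegative with total sum 1. -/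
def IsJointPMF (𝓡 : Finset (Pat d)) (p : (∀ j, X j) → Pat d → ℝ) : Prop :=
  (∀ ℓ, ∀ r ∈ 𝓡, 0 ≤ p ℓ r) ∧ (∑ ℓ : ∀ j, X j, ∑ r ∈ 𝓡, p ℓ r) = 1

/-- Marginal positivity: `p_r(ℓ, r) > 0` for every `ℓ` and every `r ∈ 𝓡`. -/
def MargPos (𝓡 : Finset (Pat d)) (p : (∀ j, X j) → Pat d → ℝ) : Prop :=
  ∀ ℓ, ∀ r ∈ 𝓡, 0 < obsP p r ℓ r

/-- Full positivity: `p(ℓ, r) > 0` for every `ℓ` and every `r ∈ 𝓡`. -/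
def FullPos (𝓡 : Finset (Pat d)) (p : (∀ j, X j) → Pat d → ℝ) : Prop :=
  ∀ ℓ, ∀ r ∈ 𝓡, 0 < p ℓ r

/-- Selection odds `O_r(ℓ) = p_r(ℓ, r) / p_r(ℓ, PA(r))`. -/
def odds (p : (∀ j, X j) → Pat d → ℝ) (PA : Pat d → Finset (Pat d)) (r : Pat d)
    (ℓ : ∀ j, X j) : ℝ :=
  obsP p r ℓ r / obsPA p r ℓ (PA r)

/-- A regular pattern graph on `𝓡`: `1_d` is a source, and every other pattern in `𝓡`
has a nonempty parent set inside `𝓡` consisting of strictly larger patterns. -/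
def IsRegularGraph (𝓡 : Finset (Pat d)) (PA : Pat d → Finset (Pat d)) : Prop :=
  PA (allOnes d) = ∅ ∧
    ∀ r ∈ 𝓡, r ≠ allOnes d → (PA r).Nonempty ∧ PA r ⊆ 𝓡 ∧ ∀ s ∈ PA r, r < s

/-- The selection odds model of `p` factorizes with respect to the pattern graph. -/
def SelOddsFactorizes (𝓡 : Finset (Pat d)) (PA : Pat d → Finset (Pat d))
    (p : (∀ j, X j) → Pat d → ℝ) : Prop :=
  ∀ r ∈ 𝓡, r ≠ allOnes d → ∀ ℓ, p ℓ r = jointA p ℓ (PA r) * odds p PA r ℓ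

/-- The pattern mixture model of `p` factorizes with respect to the pattern graph. -/
def PMMFactorizes (𝓡 : Finset (Pat d)) (PA : Pat d → Finset (Pat d))
    (p : (∀ j, X j) → Pat d → ℝ) : Prop :=
  ∀ r ∈ 𝓡, r ≠ allOnes d → ∀ ℓ,
    p ℓ r * obsPA p r ℓ (PA r) = jointA p ℓ (PA r) * obsP p r ℓ r

/-- A path from `u` to `v` in the pattern graph: a nonempty sequence
`u = r_0, r_1, …, r_m = v` of patterns in `𝓡` with `r_i ∈ PA(r_{i+1})`. -/
def IsPath (𝓡 : Finset (Pat d)) (PA : Pat d → Finset (Pat d)) (u v : Pat d)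
    (Ξ : List (Pat d)) : Prop :=
  Ξ ≠ [] ∧ Ξ.head? = some u ∧ Ξ.getLast? = some v ∧ (∀ q ∈ Ξ, q ∈ 𝓡) ∧
    Ξ.Chain' (fun a b => a ∈ PA b)

/-- An acyclic pattern graph on `𝓡`: `1_d` is the unique source (it has no parents, every
other pattern has a nonempty parent set inside `𝓡`), and the arrow relation `s ∈ PA(r)`
admits no directed cycle. -/
def IsAcyclicGraph (𝓡 : Finset (Pat d)) (PA : Pat d → Finset (Pat d)) : Prop :=
  PA (allOnes d) = ∅ ∧
    (∀ r ∈ 𝓡, r ≠ allOnes d → (PA r).Nonempty ∧ PA r ⊆ 𝓡) ∧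
    ∀ v : Pat d, ¬ Relation.TransGen (fun s t => t ∈ 𝓡 ∧ s ∈ PA t) v v

/-!
Say that `t` lies between `s` and `r` if `s ⇝ t ⇝ r` in the pattern graph. Such a `t ≠ s`
satisfies `t ≤ r`, and all of its parents lie between `s` and `r` again: the path
`1_d ⇝ q → t ⇝ r` through a parent `q` has to pass through `s`, and by acyclicity it cannot do
so after `t`. The identity `p(ℓ, t) p_r(ℓ, s) = p(ℓ, s) p_r(ℓ, t)` therefore propagates along
the arrows from `t = s` to `t = r`: summed over `PA(t)` and combined with the factorization at
`t`, it becomes an identity whose `t`-marginal factors are constant on the fibres of `~_r`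
(as `t ≤ r`); summing over such a fibre and cancelling gives the identity at `t`.
-/

section Paths

variable {𝓡 : Finset (Pat d)} {PA : Pat d → Finset (Pat d)}

inductive GraphPath (𝓡 : Finset (Pat d)) (PA : Pat d → Finset (Pat d)) :
    Pat d → Pat d → List (Pat d) → Prop
  | single {u : Pat d} (hu : u ∈ 𝓡) : GraphPath 𝓡 PA u u [u]
  | cons {u w v : Pat d} {ζ : List (Pat d)} (hu : u ∈ 𝓡) (huw : u ∈ PA w)
      (h : GraphPath 𝓡 PA w v ζ) : GraphPath 𝓡 PA u v (u :: ζ)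

def Reaches (𝓡 : Finset (Pat d)) (PA : Pat d → Finset (Pat d)) (u v : Pat d) : Prop :=
  ∃ ζ, GraphPath 𝓡 PA u v ζ

def Blocks (𝓡 : Finset (Pat d)) (PA : Pat d → Finset (Pat d)) (s r : Pat d) : Prop :=
  ∀ Ξ, IsPath 𝓡 PA (allOnes d) r Ξ → s ∈ Ξ

namespace GraphPath

variable {u v w : Pat d} {ζ ζ' : List (Pat d)}

lemma source_mem (h : GraphPath 𝓡 PA u v ζ) : u ∈ 𝓡 := by
  cases h <;> assumption

lemma target_mem_list (h : GraphPath 𝓡 PA u v ζ) : v ∈ ζ := by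
  induction h with
  | single => simp
  | cons _ _ _ ih => exact List.mem_cons_of_mem _ ih

lemma isPath (h : GraphPath 𝓡 PA u v ζ) : IsPath 𝓡 PA u v ζ := by
  induction h with
  | single hu => exact ⟨by simp, rfl, rfl, by simpa using hu, List.isChain_singleton _⟩
  | cons hu huw h ih =>
    obtain ⟨-, -, hlast, hmem, hchain⟩ := ih
    cases h with
    | single hw =>
      exact ⟨by simp, rfl, rfl, by simp [hu, hw], List.isChain_pair.mpr huw⟩
    | cons =>
      refine ⟨by simp, rfl, ?_, ?_, List.isChain_cons_cons.mpr ⟨huw, hchain⟩⟩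
      · rwa [List.getLast?_cons_cons]
      · simpa [hu] using hmem

lemma snoc (h : GraphPath 𝓡 PA u v ζ) (hw : w ∈ 𝓡) (hvw : v ∈ PA w) :
    GraphPath 𝓡 PA u w (ζ ++ [w]) := by
  induction h with
  | single hu => exact .cons hu hvw (.single hw)
  | cons hu huw _ ih => exact .cons hu huw (ih hvw)

lemma append (h : GraphPath 𝓡 PA u v ζ) (h' : GraphPath 𝓡 PA v w ζ') :
    GraphPath 𝓡 PA u w (ζ ++ ζ'.tail) := by
  induction h with
  | single => cases h' with
    | single hv => exact .single hv
    | cons hv hvw h'' => exact .cons hv hvw h''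
  | cons hu huw _ ih => exact .cons hu huw (ih h')

lemma reaches_of_mem (h : GraphPath 𝓡 PA u v ζ) (hx : w ∈ ζ) :
    Reaches 𝓡 PA u w ∧ Reaches 𝓡 PA w v := by
  induction h with
  | single hu =>
    obtain rfl := List.mem_singleton.mp hx
    exact ⟨⟨_, .single hu⟩, ⟨_, .single hu⟩⟩
  | cons hu huw h ih =>
    rcases List.mem_cons.mp hx with rfl | hx
    · exact ⟨⟨_, .single hu⟩, ⟨_, .cons hu huw h⟩⟩
    · obtain ⟨⟨ζa, ha⟩, hb⟩ := ih hx
      exact ⟨⟨_, .cons hu huw ha⟩, hb⟩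

end GraphPath

namespace Reaches

variable {u v w : Pat d}

lemma refl (hu : u ∈ 𝓡) : Reaches 𝓡 PA u u := ⟨_, .single hu⟩

lemma source_mem : Reaches 𝓡 PA u v → u ∈ 𝓡
  | ⟨_, h⟩ => h.source_mem

lemma transGen (h : Reaches 𝓡 PA u v) (huv : u ≠ v) :
    Relation.TransGen (fun s t => t ∈ 𝓡 ∧ s ∈ PA t) u v := by
  obtain ⟨ζ, h⟩ := h
  induction h with
  | single => exact absurd rfl huv
  | @cons u w v _ _ huw h ih =>
    by_cases hwv : w = v
    · subst hwv
      exact .single ⟨h.source_mem, huw⟩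
    · exact .head ⟨h.source_mem, huw⟩ (ih hwv)

lemma exists_isPath_mem (h : Reaches 𝓡 PA u v) (h' : Reaches 𝓡 PA v w) :
    ∃ ζ, IsPath 𝓡 PA u w ζ ∧ v ∈ ζ := by
  obtain ⟨ζ, h⟩ := h
  obtain ⟨ζ', h'⟩ := h'
  exact ⟨_, (h.append h').isPath, List.mem_append_left _ h.target_mem_list⟩

end Reaches

namespace IsAcyclicGraph

lemma wellFounded (hG : IsAcyclicGraph 𝓡 PA) : WellFounded (fun s t => t ∈ 𝓡 ∧ s ∈ PA t) := by
  let E : Pat d → Pat d → Prop := fun s t => t ∈ 𝓡 ∧ s ∈ PA t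
  have : IsTrans (Pat d) (Relation.TransGen E) := ⟨fun _ _ _ => .trans⟩
  have : Std.Irrefl (Relation.TransGen E) := ⟨hG.2.2⟩
  exact Subrelation.wf (fun h => .single h)
    (Finite.wellFounded_of_trans_of_irrefl (Relation.TransGen E))

variable {u v : Pat d}

lemma eq_of_reaches_of_reaches (hG : IsAcyclicGraph 𝓡 PA) (h : Reaches 𝓡 PA u v)
    (h' : Reaches 𝓡 PA v u) : u = v := by
  by_contra huv
  exact hG.2.2 u ((h.transGen huv).trans (h'.transGen (Ne.symm huv)))

lemma ne_allOnes_of_reaches (hG : IsAcyclicGraph 𝓡 PA) (h : Reaches 𝓡 PA u v) (huv : u ≠ v) :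
    v ≠ allOnes d := by
  rintro rfl
  obtain ⟨_, -, -, hq⟩ := Relation.TransGen.tail'_iff.mp (h.transGen huv)
  simp [hG.1] at hq

lemma reaches_from_allOnes (hG : IsAcyclicGraph 𝓡 PA) (hu : u ∈ 𝓡) :
    Reaches 𝓡 PA (allOnes d) u := by
  induction u using hG.wellFounded.induction with
  | _ u ih =>
  by_cases hu1 : u = allOnes d
  · subst hu1
    exact .refl hu
  obtain ⟨⟨q, hq⟩, hsub⟩ := hG.2.1 u hu hu1
  obtain ⟨ζ, h⟩ := ih q ⟨hu, hq⟩ (hsub hq)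
  exact ⟨_, h.snoc hu hq⟩

end IsAcyclicGraph

namespace Blocks

variable {s r q t : Pat d}

lemma reaches_or_mem (hb : Blocks 𝓡 PA s r) (hG : IsAcyclicGraph 𝓡 PA) {ζ : List (Pat d)}
    (h : GraphPath 𝓡 PA q r ζ) : Reaches 𝓡 PA s q ∨ s ∈ ζ := by
  obtain ⟨ζ₀, h₀⟩ := hG.reaches_from_allOnes h.source_mem
  rcases List.mem_append.mp (hb _ (h₀.append h).isPath) with hs | hs
  · exact .inl (h₀.reaches_of_mem hs).2
  · exact .inr (List.mem_of_mem_tail hs)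

lemma reaches (hb : Blocks 𝓡 PA s r) (hG : IsAcyclicGraph 𝓡 PA) (hr : r ∈ 𝓡) :
    Reaches 𝓡 PA s r := by
  rcases hb.reaches_or_mem hG (.single hr) with h | h
  · exact h
  · rw [List.mem_singleton.mp h]
    exact .refl hr

lemma reaches_parent (hb : Blocks 𝓡 PA s r) (hG : IsAcyclicGraph 𝓡 PA)
    (hst : Reaches 𝓡 PA s t) (hts : t ≠ s) (htr : Reaches 𝓡 PA t r)
    (hq : q ∈ PA t) (hq𝓡 : q ∈ 𝓡) : Reaches 𝓡 PA s q := by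
  obtain ⟨ζ, h⟩ := htr
  rcases hb.reaches_or_mem hG (.cons hq𝓡 hq h) with hsq | hs
  · exact hsq
  rcases List.mem_cons.mp hs with rfl | hs
  · exact .refl hq𝓡
  · exact absurd (hG.eq_of_reaches_of_reaches (h.reaches_of_mem hs).1 hst) hts

end Blocks

end Paths

section Extrapolation

/-- `s` and `t` induce the same conditional law of the full data given its `r`-observed part:
`p(ℓ, t) / p_r(ℓ, t) = p(ℓ, s) / p_r(ℓ, s)`, cross-multiplied. -/
def SameExtrapolation (p : (∀ j, X j) → Pat d → ℝ) (r s t : Pat d) : Prop :=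
  ∀ ℓ, p ℓ t * obsP p r ℓ s = p ℓ s * obsP p r ℓ t

lemma agree.mono {Y : Fin d → Type*} {t r : Pat d} {ℓ ℓ' : ∀ j, Y j} (htr : t ≤ r)
    (h : agree r ℓ ℓ') : agree t ℓ ℓ' :=
  fun j hj => h j (Bool.eq_true_of_true_le (hj ▸ htr j))

variable {𝓡 : Finset (Pat d)} {p : (∀ j, X j) → Pat d → ℝ} {r s t u : Pat d}
  {ℓ ℓ' : ∀ j, X j} {A : Finset (Pat d)}

lemma obsP_eq_of_agree (htr : t ≤ r) (h : agree r ℓ ℓ') :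
    obsP p t ℓ' u = obsP p t ℓ u := by
  have h := h.mono htr
  refine Finset.sum_congr (Finset.filter_congr fun x _ => ?_) fun _ _ => rfl
  exact ⟨fun h' j hj => (h j hj).trans (h' j hj), fun h' j hj => (h j hj).symm.trans (h' j hj)⟩

lemma obsPA_eq_of_agree (htr : t ≤ r) (h : agree r ℓ ℓ') : obsPA p t ℓ' A = obsPA p t ℓ A :=
  Finset.sum_congr rfl fun _ _ => obsP_eq_of_agree htr h

lemma obsP_mul_eq_of_forall_mul_eq {c e : (∀ j, X j) → ℝ} {v : Pat d}
    (hc : ∀ ℓ ℓ', agree r ℓ ℓ' → c ℓ' = c ℓ) (he : ∀ ℓ ℓ', agree r ℓ ℓ' → e ℓ' = e ℓ)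
    (h : ∀ ℓ, p ℓ u * c ℓ = p ℓ v * e ℓ) (ℓ : ∀ j, X j) :
    obsP p r ℓ u * c ℓ = obsP p r ℓ v * e ℓ := by
  simp only [obsP, Finset.sum_mul]
  refine Finset.sum_congr rfl fun ℓ' hℓ' => ?_
  have hagree : agree r ℓ ℓ' := (Finset.mem_filter.mp hℓ').2
  rw [← hc ℓ ℓ' hagree, ← he ℓ ℓ' hagree, h]

lemma FullPos.obsP_pos (hpos : FullPos 𝓡 p) (hu : u ∈ 𝓡) (t : Pat d) (ℓ : ∀ j, X j) :
    0 < obsP p t ℓ u :=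
  Finset.sum_pos (fun ℓ' _ => hpos ℓ' u hu)
    ⟨ℓ, Finset.mem_filter.mpr ⟨Finset.mem_univ _, fun _ _ => rfl⟩⟩

lemma FullPos.obsPA_pos (hpos : FullPos 𝓡 p) (hA : A.Nonempty) (hA𝓡 : A ⊆ 𝓡) (t : Pat d)
    (ℓ : ∀ j, X j) : 0 < obsPA p t ℓ A :=
  Finset.sum_pos (fun _ hu => hpos.obsP_pos (hA𝓡 hu) t ℓ) hA

lemma SameExtrapolation.sum (h : ∀ q ∈ A, SameExtrapolation p r s q) (ℓ : ∀ j, X j) :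
    jointA p ℓ A * obsP p r ℓ s = p ℓ s * obsPA p r ℓ A := by
  simp only [jointA, obsPA, Finset.sum_mul, Finset.mul_sum]
  exact Finset.sum_congr rfl fun q hq => h q hq ℓ

lemma SameExtrapolation.of_parents (htr : t ≤ r) (hs : ∀ ℓ, 0 < obsP p r ℓ s)
    (hA : ∀ ℓ, 0 < obsPA p t ℓ A)
    (hfact : ∀ ℓ, p ℓ t * obsPA p t ℓ A = jointA p ℓ A * obsP p t ℓ t)
    (hpar : ∀ q ∈ A, SameExtrapolation p r s q) : SameExtrapolation p r s t := by
  have hjoint (ℓ : ∀ j, X j) : p ℓ t * (obsPA p t ℓ A * obsP p r ℓ s)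
      = p ℓ s * (obsPA p r ℓ A * obsP p t ℓ t) := by
    linear_combination obsP p r ℓ s * hfact ℓ + obsP p t ℓ t * SameExtrapolation.sum hpar ℓ
  have hmarg := obsP_mul_eq_of_forall_mul_eq (r := r)
    (fun ℓ ℓ' h => by rw [obsPA_eq_of_agree htr h, obsP_eq_of_agree le_rfl h])
    (fun ℓ ℓ' h => by rw [obsPA_eq_of_agree le_rfl h, obsP_eq_of_agree htr h]) hjoint
  have hobs (ℓ : ∀ j, X j) : obsP p r ℓ t * obsPA p t ℓ A = obsPA p r ℓ A * obsP p t ℓ t :=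
    mul_right_cancel₀ (hs ℓ).ne' (by linear_combination hmarg ℓ)
  intro ℓ
  exact mul_right_cancel₀ (hA ℓ).ne' (by linear_combination hjoint ℓ - p ℓ s * hobs ℓ)

end Extrapolation

lemma sameExtrapolation_of_reaches {𝓡 : Finset (Pat d)} {PA : Pat d → Finset (Pat d)}
    {p : (∀ j, X j) → Pat d → ℝ} {r s t : Pat d} (hG : IsAcyclicGraph 𝓡 PA)
    (hpos : FullPos 𝓡 p) (hfact : PMMFactorizes 𝓡 PA p) (hs : s ∈ 𝓡)
    (hblock : Blocks 𝓡 PA s r)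
    (huninf : ∀ q, q ≠ s → q ≠ r → (∃ ζ, IsPath 𝓡 PA s r ζ ∧ q ∈ ζ) → q < r)
    (hst : Reaches 𝓡 PA s t) (htr : Reaches 𝓡 PA t r) : SameExtrapolation p r s t := by
  induction t using hG.wellFounded.induction with
  | _ t ih =>
  by_cases hts : t = s
  · subst hts
    exact fun _ => rfl
  have ht : t ∈ 𝓡 := htr.source_mem
  have ht1 : t ≠ allOnes d := hG.ne_allOnes_of_reaches hst (Ne.symm hts)
  have hle : t ≤ r := by
    by_cases htr' : t = r
    · exact htr'.le
    · exact (huninf t hts htr' (hst.exists_isPath_mem htr)).le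
  obtain ⟨hA, hA𝓡⟩ := hG.2.1 t ht ht1
  refine .of_parents hle (hpos.obsP_pos hs r) (hpos.obsPA_pos hA hA𝓡 t) (hfact t ht ht1)
    fun q hq => ?_
  obtain ⟨ζ, h⟩ := htr
  exact ih q ⟨ht, hq⟩ (hblock.reaches_parent hG hst hts ⟨ζ, h⟩ hq (hA𝓡 hq))
    ⟨_, .cons (hA𝓡 hq) hq h⟩

theorem equivalent_graph_rewiring_general
    (𝓡 : Finset (Pat d))
    (PA : Pat d → Finset (Pat d)) (hG : IsAcyclicGraph 𝓡 PA)
    (p : (∀ j, X j) → Pat d → ℝ)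
    (hpos : FullPos 𝓡 p)
    (hfact : PMMFactorizes 𝓡 PA p)
    (r s : Pat d) (hr : r ∈ 𝓡) (hs : s ∈ 𝓡)
    (hblock : ∀ Ξ, IsPath 𝓡 PA (allOnes d) r Ξ → s ∈ Ξ)
    (huninf : ∀ q, q ≠ s → q ≠ r → (∃ ζ, IsPath 𝓡 PA s r ζ ∧ q ∈ ζ) → q < r) :
    (∀ ℓ, p ℓ r * obsP p r ℓ s = p ℓ s * obsP p r ℓ r) ∧
    PMMFactorizes 𝓡 (fun t => if t = r then {s} else PA t) p := by
  have hsr : SameExtrapolation p r s r :=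
    sameExtrapolation_of_reaches hG hpos hfact hs hblock huninf
      (Blocks.reaches hblock hG hr) (.refl hr)
  refine ⟨hsr, fun t ht ht1 ℓ => ?_⟩
  by_cases htr : t = r
  · subst htr
    simpa [obsPA, jointA] using hsr ℓ
  · simpa only [if_neg htr] using hfact t ht ht1 ℓ

/-- **Theorem (equivalent graphs).** If `s` blocks every path from `1_d` to `r` and every
pattern strictly inside a path from `s` to `r` is uninformative for `r` (i.e. `q < r`),
then the extrapolation distribution of `r` equals that computed from `s` alone, and the
pattern mixture model also factorizes w.r.t. the graph in which `PA(r)` is replaced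
by `{s}`. -/
theorem equivalent_graph_rewiring [∀ j, Nonempty (X j)]
    (𝓡 : Finset (Pat d)) (h𝓡 : allOnes d ∈ 𝓡)
    (PA : Pat d → Finset (Pat d)) (hG : IsAcyclicGraph 𝓡 PA)
    (p : (∀ j, X j) → Pat d → ℝ)
    (hpmf : IsJointPMF 𝓡 p) (hpos : FullPos 𝓡 p)
    (hfact : PMMFactorizes 𝓡 PA p)
    (r s : Pat d) (hr : r ∈ 𝓡) (hs : s ∈ 𝓡) (hsr : s ∉ PA r)
    (hblock : ∀ Ξ, IsPath 𝓡 PA (allOnes d) r Ξ → s ∈ Ξ)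
    (huninf : ∀ q, q ≠ s → q ≠ r → (∃ ζ, IsPath 𝓡 PA s r ζ ∧ q ∈ ζ) → q < r) :
    (∀ ℓ, p ℓ r * obsP p r ℓ s = p ℓ s * obsP p r ℓ r) ∧
    PMMFactorizes 𝓡 (fun t => if t = r then {s} else PA t) p :=
  equivalent_graph_rewiring_general 𝓡 PA hG p hpos hfact r s hr hs hblock huninf
end
end

section
/- Let G be a regular pattern graph on a pattern set 𝓡 and let p be a joint pmf satisfying marginal positivity whose selection odds model factorizes with respect to G. Then the set of observable functions w with Σ_{r ∈ 𝓡} w(ℓ, r) · p(ℓ, r) = 0 for every ℓ (conditional mean zero given L) equals the set of functions of the form (ℓ, ρ) ↦ Σ_{r ∈ 𝓡, r ≠ 1_d} (1{ρ = r} − O_r(ℓ) · 1{ρ ∈ PA(r)}) · Ψ(ℓ, r), where Ψ ranges over all observable functions; equivalently, the augmentation space 𝒢 of all mean-zero augmentations of the IPW estimator coincides with the space 𝓕 of pattern-graph augmentations. -/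
open Finset

noncomputable section

variable {d : ℕ}


variable {X : Fin d → Type*} [∀ j, Fintype (X j)] [∀ j, DecidableEq (X j)]

/-- A function of `(ℓ, r)` is observable on `𝓡` if, for each pattern `r ∈ 𝓡`, it depends
on `ℓ` only through the coordinates observed under `r`. -/
def Observable (𝓡 : Finset (Pat d)) {X : Fin d → Type*}
    (w : (∀ j, X j) → Pat d → ℝ) : Prop :=
  ∀ r ∈ 𝓡, ∀ ℓ ℓ', agree r ℓ ℓ' → w ℓ r = w ℓ' r

/-! Fix `w` observable with conditional mean zero. Since every parent of `r` lies strictly above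
`r`, the coefficients `Ψ(ℓ, r) = w(ℓ, r) + Σ_{q : r ∈ PA(q)} O_q(ℓ) Ψ(ℓ, q)` are well defined by
recursion down the pattern order, and they are observable because `O_q` and `Ψ(·, q)` only
see coordinates observed under `q < r`. By construction the augmentation built from `Ψ` agrees
with `w` at every pattern other than `1_d`. Both have conditional mean zero (for the
augmentation this is the factorization `p(ℓ, r) = p(ℓ, PA(r)) O_r(ℓ)`), so they also agree at
`1_d`, whose probability `p(ℓ, 1_d) = p_{1_d}(ℓ, 1_d)` is positive. -/

theorem Finset.eq_of_sum_mul_eq_of_forall_ne {ι R : Type*} [Ring R] [NoZeroDivisors R]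
    {s : Finset ι} {a : ι} (ha : a ∈ s) {f g q : ι → R}
    (hfg : ∀ x ∈ s, x ≠ a → f x = g x) (hq : q a ≠ 0)
    (h : ∑ x ∈ s, f x * q x = ∑ x ∈ s, g x * q x) : f a = g a := by
  classical
  have hrest : ∑ x ∈ s.erase a, f x * q x = ∑ x ∈ s.erase a, g x * q x :=
    sum_congr rfl fun x hx => by rw [hfg x (mem_of_mem_erase hx) (ne_of_mem_erase hx)]
  rw [← add_sum_erase s _ ha, ← add_sum_erase s _ ha, hrest] at h
  exact mul_right_cancel₀ hq (add_right_cancel h)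

section

variable {X : Fin d → Type*}

theorem agree_of_le {r s : Pat d} (hrs : r ≤ s) {ℓ ℓ' : ∀ j, X j} (h : agree s ℓ ℓ') :
    agree r ℓ ℓ' := fun j hj => h j (Bool.le_iff_imp.mp (hrs j) hj)

end

theorem obsP_congr (p : (∀ j, X j) → Pat d → ℝ) {r : Pat d} {ℓ ℓ' : ∀ j, X j}
    (h : agree r ℓ ℓ') (s : Pat d) : obsP p r ℓ s = obsP p r ℓ' s := by
  have hagree : ∀ ℓ'', agree r ℓ ℓ'' ↔ agree r ℓ' ℓ'' := fun ℓ'' =>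
    ⟨fun h' j hj => (h j hj).symm.trans (h' j hj), fun h' j hj => (h j hj).trans (h' j hj)⟩
  simp only [obsP, hagree]

theorem odds_congr (p : (∀ j, X j) → Pat d → ℝ) (PA : Pat d → Finset (Pat d)) {r : Pat d}
    {ℓ ℓ' : ∀ j, X j} (h : agree r ℓ ℓ') : odds p PA r ℓ = odds p PA r ℓ' := by
  simp only [odds, obsPA, obsP_congr p h]

theorem obsP_allOnes (p : (∀ j, X j) → Pat d → ℝ) (ℓ : ∀ j, X j) (s : Pat d) :
    obsP p (allOnes d) ℓ s = p ℓ s := by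
  have hagree : ∀ ℓ', agree (allOnes d) ℓ ℓ' ↔ ℓ' = ℓ := fun ℓ' =>
    ⟨fun h => funext fun j => (h j rfl).symm, fun h j _ => h ▸ rfl⟩
  simp only [obsP, hagree, filter_eq', mem_univ, if_true, sum_singleton]

section Augmentation

variable (𝓡 : Finset (Pat d)) (PA : Pat d → Finset (Pat d)) (p : (∀ j, X j) → Pat d → ℝ)

def graphAugmentation (Ψ : (∀ j, X j) → Pat d → ℝ) (ℓ : ∀ j, X j) (ρ : Pat d) : ℝ :=
  ∑ r ∈ 𝓡.erase (allOnes d),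
    ((if ρ = r then (1:ℝ) else 0) - odds p PA r ℓ * (if ρ ∈ PA r then (1:ℝ) else 0)) * Ψ ℓ r

theorem graphAugmentation_eq (Ψ : (∀ j, X j) → Pat d → ℝ) (ℓ : ∀ j, X j) (ρ : Pat d) :
    graphAugmentation 𝓡 PA p Ψ ℓ ρ =
      (if ρ ∈ 𝓡.erase (allOnes d) then Ψ ℓ ρ else 0) -
        ∑ r ∈ (𝓡.erase (allOnes d)).filter (ρ ∈ PA ·), odds p PA r ℓ * Ψ ℓ r := by
  have hsplit : ∀ r, ((if ρ = r then (1:ℝ) else 0)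
      - odds p PA r ℓ * (if ρ ∈ PA r then (1:ℝ) else 0)) * Ψ ℓ r =
      (if ρ = r then Ψ ℓ r else 0) - (if ρ ∈ PA r then odds p PA r ℓ * Ψ ℓ r else 0) := by
    intro r; split_ifs <;> ring
  simp only [graphAugmentation, hsplit, sum_sub_distrib, sum_ite_eq, sum_filter]

attribute [local instance] WellFoundedLT.toWellFoundedRelation

/-- The guard `r < ρ` is implied by `ρ ∈ PA r` for a regular graph; it makes the recursion
well founded for arbitrary `PA`. -/
def graphAugCoeff (w : (∀ j, X j) → Pat d → ℝ) (ℓ : ∀ j, X j) (ρ : Pat d) : ℝ :=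
  w ℓ ρ + ∑ r ∈ ((𝓡.erase (allOnes d)).filter (fun r => ρ ∈ PA r ∧ r < ρ)).attach,
    odds p PA r.1 ℓ * graphAugCoeff w ℓ r.1
termination_by ρ
decreasing_by exact (mem_filter.mp r.2).2.2

theorem graphAugCoeff_eq (w : (∀ j, X j) → Pat d → ℝ) (ℓ : ∀ j, X j) (ρ : Pat d) :
    graphAugCoeff 𝓡 PA p w ℓ ρ = w ℓ ρ +
      ∑ r ∈ (𝓡.erase (allOnes d)).filter (fun r => ρ ∈ PA r ∧ r < ρ),
        odds p PA r ℓ * graphAugCoeff 𝓡 PA p w ℓ r := by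
  rw [graphAugCoeff, sum_attach _ fun r => odds p PA r ℓ * graphAugCoeff 𝓡 PA p w ℓ r]

variable {𝓡 PA p}

theorem graphAugCoeff_eq_of_isRegularGraph (hG : IsRegularGraph 𝓡 PA)
    (w : (∀ j, X j) → Pat d → ℝ) (ℓ : ∀ j, X j) (ρ : Pat d) :
    graphAugCoeff 𝓡 PA p w ℓ ρ = w ℓ ρ +
      ∑ r ∈ (𝓡.erase (allOnes d)).filter (ρ ∈ PA ·),
        odds p PA r ℓ * graphAugCoeff 𝓡 PA p w ℓ r := by
  rw [graphAugCoeff_eq]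
  congr 2
  refine filter_congr fun r hr => and_iff_left_of_imp fun hρr => ?_
  obtain ⟨hr1, hr⟩ := mem_erase.mp hr
  exact (hG.2 r hr hr1).2.2 ρ hρr

theorem graphAugmentation_graphAugCoeff (hG : IsRegularGraph 𝓡 PA) (w : (∀ j, X j) → Pat d → ℝ)
    (ℓ : ∀ j, X j) {ρ : Pat d} (hρ : ρ ∈ 𝓡.erase (allOnes d)) :
    graphAugmentation 𝓡 PA p (graphAugCoeff 𝓡 PA p w) ℓ ρ = w ℓ ρ := by
  rw [graphAugmentation_eq, if_pos hρ, graphAugCoeff_eq_of_isRegularGraph hG, add_sub_cancel_right]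

theorem Observable.graphAugCoeff {w : (∀ j, X j) → Pat d → ℝ} (hw : Observable 𝓡 w) :
    Observable 𝓡 (graphAugCoeff 𝓡 PA p w) := by
  intro ρ
  induction ρ using WellFoundedLT.induction with
  | _ ρ ih =>
    intro hρ ℓ ℓ' h
    rw [graphAugCoeff_eq, graphAugCoeff_eq, hw ρ hρ ℓ ℓ' h]
    congr 1
    refine sum_congr rfl fun r hr => ?_
    rw [mem_filter, mem_erase] at hr
    obtain ⟨⟨-, hr⟩, -, hrρ⟩ := hr
    have hagree : agree r ℓ ℓ' := agree_of_le hrρ.le h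
    rw [odds_congr p PA hagree, ih r hrρ hr ℓ ℓ' hagree]

theorem Observable.graphAugmentation (hG : IsRegularGraph 𝓡 PA)
    {Ψ : (∀ j, X j) → Pat d → ℝ} (hΨ : Observable 𝓡 Ψ) :
    Observable 𝓡 (graphAugmentation 𝓡 PA p Ψ) := by
  intro ρ hρ ℓ ℓ' h
  rw [graphAugmentation_eq, graphAugmentation_eq, hΨ ρ hρ ℓ ℓ' h]
  congr 1
  refine sum_congr rfl fun r hr => ?_
  rw [mem_filter, mem_erase] at hr
  obtain ⟨⟨hr1, hr⟩, hρr⟩ := hr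
  have hagree : agree r ℓ ℓ' := agree_of_le ((hG.2 r hr hr1).2.2 ρ hρr).le h
  rw [odds_congr p PA hagree, hΨ r hr ℓ ℓ' hagree]

theorem sum_graphAugmentation_mul_eq_zero (hG : IsRegularGraph 𝓡 PA)
    (hfact : SelOddsFactorizes 𝓡 PA p) (Ψ : (∀ j, X j) → Pat d → ℝ) (ℓ : ∀ j, X j) :
    ∑ ρ ∈ 𝓡, graphAugmentation 𝓡 PA p Ψ ℓ ρ * p ℓ ρ = 0 := by
  simp only [graphAugmentation, sum_mul]
  rw [sum_comm]
  refine sum_eq_zero fun r hr => ?_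
  obtain ⟨hr1, hr⟩ := mem_erase.mp hr
  have hself : ∑ ρ ∈ 𝓡, (if ρ = r then p ℓ ρ else 0) = p ℓ r := by simp [hr]
  have hparents : ∑ ρ ∈ 𝓡, (if ρ ∈ PA r then p ℓ ρ else 0) = jointA p ℓ (PA r) := by
    rw [sum_ite_mem, inter_eq_right.mpr (hG.2 r hr hr1).2.1, jointA]
  calc ∑ ρ ∈ 𝓡, ((if ρ = r then (1:ℝ) else 0)
        - odds p PA r ℓ * (if ρ ∈ PA r then (1:ℝ) else 0)) * Ψ ℓ r * p ℓ ρ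
      = Ψ ℓ r * (∑ ρ ∈ 𝓡, (if ρ = r then p ℓ ρ else 0)
          - odds p PA r ℓ * ∑ ρ ∈ 𝓡, (if ρ ∈ PA r then p ℓ ρ else 0)) := by
        rw [mul_sum, ← sum_sub_distrib, mul_sum]
        exact sum_congr rfl fun ρ _ => by split_ifs <;> ring
    _ = 0 := by rw [hself, hparents, hfact r hr hr1 ℓ]; ring

end Augmentation

theorem augmentation_space_pattern_graph_general
    (𝓡 : Finset (Pat d))
    (PA : Pat d → Finset (Pat d)) (hG : IsRegularGraph 𝓡 PA)
    (p : (∀ j, X j) → Pat d → ℝ)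
    (hpos : MargPos 𝓡 p)
    (hfact : SelOddsFactorizes 𝓡 PA p) :
    ∀ w : (∀ j, X j) → Pat d → ℝ,
      (Observable 𝓡 w ∧ ∀ ℓ, ∑ r ∈ 𝓡, w ℓ r * p ℓ r = 0) ↔
      (∃ Ψ : (∀ j, X j) → Pat d → ℝ, Observable 𝓡 Ψ ∧
        ∀ ℓ, ∀ ρ ∈ 𝓡, w ℓ ρ =
          ∑ r ∈ 𝓡.erase (allOnes d),
            ((if ρ = r then (1:ℝ) else 0)
              - odds p PA r ℓ * (if ρ ∈ PA r then (1:ℝ) else 0)) * Ψ ℓ r) := by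
  intro w
  change _ ↔ ∃ Ψ, Observable 𝓡 Ψ ∧ ∀ ℓ, ∀ ρ ∈ 𝓡, w ℓ ρ = graphAugmentation 𝓡 PA p Ψ ℓ ρ
  constructor
  · rintro ⟨hw, hmean⟩
    refine ⟨graphAugCoeff 𝓡 PA p w, hw.graphAugCoeff, fun ℓ ρ hρ => ?_⟩
    obtain rfl | hρ1 := eq_or_ne ρ (allOnes d)
    · have hp1 : p ℓ (allOnes d) ≠ 0 := by simpa only [obsP_allOnes] using (hpos ℓ _ hρ).ne'
      refine eq_of_sum_mul_eq_of_forall_ne hρ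
        (fun r hr hr1 => (graphAugmentation_graphAugCoeff hG w ℓ (mem_erase.mpr ⟨hr1, hr⟩)).symm)
        hp1 ?_
      rw [hmean, sum_graphAugmentation_mul_eq_zero hG hfact]
    · exact (graphAugmentation_graphAugCoeff hG w ℓ (mem_erase.mpr ⟨hρ1, hρ⟩)).symm
  · rintro ⟨Ψ, hΨ, hw⟩
    refine ⟨fun ρ hρ ℓ ℓ' h => ?_, fun ℓ => ?_⟩
    · rw [hw ℓ ρ hρ, hw ℓ' ρ hρ]
      exact hΨ.graphAugmentation hG ρ hρ ℓ ℓ' h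
    · rw [sum_congr rfl fun ρ hρ => by rw [hw ℓ ρ hρ]]
      exact sum_graphAugmentation_mul_eq_zero hG hfact Ψ ℓ

/-- **Proposition (pattern-graph augmentation space).** Under selection-odds factorization
w.r.t. a regular pattern graph, the space of observable functions with conditional mean
zero given `L` coincides with the space of pattern-graph augmentations
`(ℓ, ρ) ↦ Σ_{r ≠ 1_d} (1{ρ = r} − O_r(ℓ)·1{ρ ∈ PA(r)})·Ψ(ℓ, r)` with `Ψ` observable. -/
theorem augmentation_space_pattern_graph [∀ j, Nonempty (X j)]
    (𝓡 : Finset (Pat d)) (h𝓡 : allOnes d ∈ 𝓡)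
    (PA : Pat d → Finset (Pat d)) (hG : IsRegularGraph 𝓡 PA)
    (p : (∀ j, X j) → Pat d → ℝ)
    (hpmf : IsJointPMF 𝓡 p) (hpos : MargPos 𝓡 p)
    (hfact : SelOddsFactorizes 𝓡 PA p) :
    ∀ w : (∀ j, X j) → Pat d → ℝ,
      (Observable 𝓡 w ∧ ∀ ℓ, ∑ r ∈ 𝓡, w ℓ r * p ℓ r = 0) ↔
      (∃ Ψ : (∀ j, X j) → Pat d → ℝ, Observable 𝓡 Ψ ∧
        ∀ ℓ, ∀ ρ ∈ 𝓡, w ℓ ρ =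
          ∑ r ∈ 𝓡.erase (allOnes d),
            ((if ρ = r then (1:ℝ) else 0)
              - odds p PA r ℓ * (if ρ ∈ PA r then (1:ℝ) else 0)) * Ψ ℓ r) :=
  augmentation_space_pattern_graph_general 𝓡 PA hG p hpos hfact
end
end
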